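/- arXiv:1607.07535 — 4 statements merged into one kernel-verified Lean document; each statement's English description precedes it below -/
import Mathlib

section
/- If G is an undirected graph on n nodes with nonnegative symmetric adjacency weights, L its Laplacian, and P a nonnegative diagonal pinning matrix such that from the leader (pinned nodes) every node is reachable (i.e., every node has a path to some pinned node), then the matrix M = L + P is symmetric positive definite. -/
/-!
The quadratic form of `L + P` is `½ ∑ᵢⱼ wᵢⱼ (xᵢ - xⱼ)² + ∑ᵢ pᵢ xᵢ²`, a sum of nonnegative terms.
If it vanishes, `x` is constant along every edge and zero at every pinned node; since every
node is joined to a pinned node by a path, `x = 0`.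
-/

open Matrix Finset

theorem Relation.ReflTransGen.apply_eq_apply {α β : Type*} {r : α → α → Prop} {a b : α}
    (hab : Relation.ReflTransGen r a b) {f : α → β} (hf : ∀ a b, r a b → f a = f b) :
    f a = f b := by
  induction hab with
  | refl => rfl
  | tail _ hbc ih => exact ih.trans (hf _ _ hbc)

variable {ι : Type*} [Fintype ι]

theorem eq_zero_of_dirichlet_energy_eq_zero {W : Matrix ι ι ℝ} {p x : ι → ℝ}
    (hW : ∀ i j, 0 ≤ W i j) (hp : ∀ i, 0 ≤ p i)
    (hreach : ∀ i, ∃ j, Relation.ReflTransGen (fun a b => 0 < W a b) i j ∧ 0 < p j)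
    (hedges : ∑ i, ∑ j, W i j * (x i - x j) ^ 2 = 0) (hpins : ∑ i, p i * x i ^ 2 = 0) :
    x = 0 := by
  have hedge : ∀ a b, 0 < W a b → x a = x b := by
    intro a b hab
    have hrow := congrFun ((Fintype.sum_eq_zero_iff_of_nonneg fun i =>
      sum_nonneg fun j _ => mul_nonneg (hW i j) (sq_nonneg _)).mp hedges) a
    have hterm := congrFun ((Fintype.sum_eq_zero_iff_of_nonneg fun j =>
      mul_nonneg (hW a j) (sq_nonneg _)).mp hrow) b
    simpa [hab.ne', sub_eq_zero] using hterm
  have hpin : ∀ j, 0 < p j → x j = 0 := by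
    intro j hj
    have hterm := congrFun ((Fintype.sum_eq_zero_iff_of_nonneg fun i =>
      mul_nonneg (hp i) (sq_nonneg (x i))).mp hpins) j
    simpa [hj.ne'] using hterm
  funext i
  obtain ⟨j, hij, hj⟩ := hreach i
  rw [Pi.zero_apply, hij.apply_eq_apply hedge, hpin j hj]

variable [DecidableEq ι]

def weightedLaplacian (W : Matrix ι ι ℝ) : Matrix ι ι ℝ :=
  diagonal (fun i => ∑ j, W i j) - W

theorem eq_weightedLaplacian {W L : Matrix ι ι ℝ} (hWdiag : ∀ i, W i i = 0)
    (hL : ∀ i j, L i j = if i = j then ∑ k, W i k else - W i j) :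
    L = weightedLaplacian W := by
  ext i j
  by_cases h : i = j
  · subst h; simp [weightedLaplacian, hL, hWdiag]
  · simp [weightedLaplacian, hL, h]

theorem weightedLaplacian_isSymm {W : Matrix ι ι ℝ} (hW : W.IsSymm) :
    (weightedLaplacian W).IsSymm :=
  (isSymm_diagonal _).sub hW

theorem dotProduct_diagonal_mulVec_self (p x : ι → ℝ) :
    x ⬝ᵥ (diagonal p *ᵥ x) = ∑ i, p i * x i ^ 2 := by
  simp only [dotProduct, mulVec_diagonal]
  exact sum_congr rfl fun i _ => by ring

theorem dotProduct_weightedLaplacian_mulVec {W : Matrix ι ι ℝ} (hW : W.IsSymm) (x : ι → ℝ) :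
    x ⬝ᵥ (weightedLaplacian W *ᵥ x) = (∑ i, ∑ j, W i j * (x i - x j) ^ 2) / 2 := by
  have hswap : ∑ i, ∑ j, W i j * x j ^ 2 = ∑ i, ∑ j, W i j * x i ^ 2 := by
    rw [sum_comm]
    exact sum_congr rfl fun i _ => sum_congr rfl fun j _ => by rw [hW.apply i j]
  have hexpand : ∑ i, ∑ j, W i j * (x i - x j) ^ 2 =
      ∑ i, ∑ j, W i j * x i ^ 2 - 2 * (x ⬝ᵥ (W *ᵥ x)) + ∑ i, ∑ j, W i j * x j ^ 2 := by
    simp only [dotProduct, mulVec, mul_sum, ← sum_sub_distrib, ← sum_add_distrib]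
    exact sum_congr rfl fun i _ => sum_congr rfl fun j _ => by ring
  rw [hexpand, hswap, weightedLaplacian, sub_mulVec, dotProduct_sub,
    dotProduct_diagonal_mulVec_self]
  simp only [sum_mul]
  ring

theorem posDef_weightedLaplacian_add_diagonal {W : Matrix ι ι ℝ} {p : ι → ℝ}
    (hWsymm : W.IsSymm) (hW : ∀ i j, 0 ≤ W i j) (hp : ∀ i, 0 ≤ p i)
    (hreach : ∀ i, ∃ j, Relation.ReflTransGen (fun a b => 0 < W a b) i j ∧ 0 < p j) :
    (weightedLaplacian W + diagonal p).PosDef := by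
  refine posDef_iff_dotProduct_mulVec.mpr ⟨isHermitian_iff_isSymm.mpr
    ((weightedLaplacian_isSymm hWsymm).add (isSymm_diagonal p)), fun x hx => ?_⟩
  rw [star_trivial, add_mulVec, dotProduct_add, dotProduct_weightedLaplacian_mulVec hWsymm,
    dotProduct_diagonal_mulVec_self]
  have hedges : 0 ≤ ∑ i, ∑ j, W i j * (x i - x j) ^ 2 :=
    sum_nonneg fun i _ => sum_nonneg fun j _ => mul_nonneg (hW i j) (sq_nonneg _)
  have hpins : 0 ≤ ∑ i, p i * x i ^ 2 := sum_nonneg fun i _ => mul_nonneg (hp i) (sq_nonneg _)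
  by_contra! hle
  exact hx (eq_zero_of_dirichlet_energy_eq_zero hW hp hreach (by linarith) (by linarith))

/-- If W is a symmetric nonnegative adjacency matrix with zero diagonal,
L its Laplacian, P a nonnegative diagonal pinning matrix, and every node has a path
(through positive-weight edges) to some pinned node, then M = L + P is symmetric
positive definite. -/
theorem laplacian_plus_pinning_posdef
    (n : ℕ) (W : Matrix (Fin n) (Fin n) ℝ)
    (hWsymm : ∀ i j, W i j = W j i)
    (hWnonneg : ∀ i j, 0 ≤ W i j)
    (hWdiag : ∀ i, W i i = 0)
    (p : Fin n → ℝ) (hp : ∀ i, 0 ≤ p i)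
    (L : Matrix (Fin n) (Fin n) ℝ)
    (hL : ∀ i j, L i j = if i = j then ∑ k, W i k else - W i j)
    (hreach : ∀ i : Fin n, ∃ j : Fin n,
      Relation.ReflTransGen (fun a b => 0 < W a b) i j ∧ 0 < p j) :
    (L + Matrix.diagonal p).IsSymm ∧ (L + Matrix.diagonal p).PosDef := by
  have hW : W.IsSymm := ext fun i j => hWsymm j i
  rw [eq_weightedLaplacian hWdiag hL]
  exact ⟨(weightedLaplacian_isSymm hW).add (isSymm_diagonal p),
    posDef_weightedLaplacian_add_diagonal hW hWnonneg hp hreach⟩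
end

section
/- The vector field f(z₁,z₂) = (z₂, -c₁·sig(M z₁)^{α₁} - c₂·sig(M z₂)^{α₂}) on ℝ^{mn} × ℝ^{mn} is homogeneous of degree λ = α₁ - 1 with respect to the dilation assigning weight 2 to each component of z₁ and weight α₁+1 to each component of z₂, provided α₂ = 2α₁/(α₁+1). -/
open Matrix

noncomputable def sigv {k : ℕ} (κ : ℝ) (z : Fin k → ℝ) : Fin k → ℝ :=
  fun i => |z i| ^ κ * Real.sign (z i)

/-! Each power map `sig(·)^κ` is positively homogeneous of degree `κ`, and `M` is linear, so under
the dilation `(z₁, z₂) ↦ (ε² z₁, ε^(α₁+1) z₂)` the two terms of `f₂` scale by `ε^(2α₁)` and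
`ε^((α₁+1)α₂)`. The choice `α₂ = 2α₁/(α₁+1)` makes both exponents equal to `λ + (α₁+1) = 2α₁`. -/

theorem Real.sign_mul_of_pos {c : ℝ} (hc : 0 < c) (x : ℝ) : Real.sign (c * x) = Real.sign x := by
  rcases lt_trichotomy x 0 with hx | rfl | hx
  · rw [Real.sign_of_neg hx, Real.sign_of_neg (mul_neg_of_pos_of_neg hc hx)]
  · rw [mul_zero]
  · rw [Real.sign_of_pos hx, Real.sign_of_pos (mul_pos hc hx)]

theorem sigv_smul_of_pos {k : ℕ} (κ : ℝ) {c : ℝ} (hc : 0 < c) (z : Fin k → ℝ) :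
    sigv κ (c • z) = c ^ κ • sigv κ z := by
  funext i
  simp only [sigv, Pi.smul_apply, smul_eq_mul, abs_mul, abs_of_pos hc,
    Real.sign_mul_of_pos hc, Real.mul_rpow hc.le (abs_nonneg _)]
  ring

theorem smul_sigv_mulVec_smul_rpow {k : ℕ} (M : Matrix (Fin k) (Fin k) ℝ) (c κ γ : ℝ) {ε : ℝ}
    (hε : 0 < ε) (z : Fin k → ℝ) :
    c • sigv κ (M *ᵥ (ε ^ γ • z)) = ε ^ (γ * κ) • c • sigv κ (M *ᵥ z) := by
  rw [mulVec_smul, sigv_smul_of_pos κ (Real.rpow_pos_of_pos hε γ), Real.rpow_mul hε.le,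
    smul_comm]

theorem closed_loop_homogeneous_general (N : ℕ) (M : Matrix (Fin N) (Fin N) ℝ)
    (c₁ c₂ α₁ α₂ : ℝ)
    (hα₁ : 0 < α₁) (hα₂ : α₂ = 2 * α₁ / (α₁ + 1))
    (f₁ f₂ : (Fin N → ℝ) → (Fin N → ℝ) → (Fin N → ℝ))
    (hf₁ : ∀ z₁ z₂, f₁ z₁ z₂ = z₂)
    (hf₂ : ∀ z₁ z₂, f₂ z₁ z₂ =
      - c₁ • sigv α₁ (M.mulVec z₁) - c₂ • sigv α₂ (M.mulVec z₂)) :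
    ∀ (ε : ℝ), 0 < ε → ∀ z₁ z₂ : Fin N → ℝ,
      f₁ (ε ^ (2:ℝ) • z₁) (ε ^ (α₁ + 1) • z₂) = ε ^ ((α₁ - 1) + 2) • f₁ z₁ z₂ ∧
      f₂ (ε ^ (2:ℝ) • z₁) (ε ^ (α₁ + 1) • z₂) = ε ^ ((α₁ - 1) + (α₁ + 1)) • f₂ z₁ z₂ := by
  intro ε hε z₁ z₂
  have hdegree : (α₁ - 1) + (α₁ + 1) = 2 * α₁ := by ring
  have hα₂_scale : (α₁ + 1) * α₂ = 2 * α₁ := hα₂ ▸ mul_div_cancel₀ _ (by linarith)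
  refine ⟨by rw [hf₁, hf₁, show (α₁ - 1) + 2 = α₁ + 1 by ring], ?_⟩
  rw [hf₂, hf₂, neg_smul, neg_smul, smul_sigv_mulVec_smul_rpow M c₁ α₁ 2 hε,
    smul_sigv_mulVec_smul_rpow M c₂ α₂ (α₁ + 1) hε, hα₂_scale, hdegree, smul_sub, smul_neg]

/-- The vector field f(z₁,z₂) = (z₂, -c₁ sig(Mz₁)^{α₁} - c₂ sig(Mz₂)^{α₂})
is homogeneous of degree λ = α₁ - 1 with dilation weight 2 on z₁ and α₁+1 on z₂,
provided α₂ = 2α₁/(α₁+1). -/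
theorem closed_loop_homogeneous (N : ℕ) (M : Matrix (Fin N) (Fin N) ℝ)
    (c₁ c₂ α₁ α₂ : ℝ) (hc₁ : 0 < c₁) (hc₂ : 0 < c₂)
    (hα₁ : 0 < α₁) (hα₁' : α₁ < 1) (hα₂ : α₂ = 2 * α₁ / (α₁ + 1))
    (f₁ f₂ : (Fin N → ℝ) → (Fin N → ℝ) → (Fin N → ℝ))
    (hf₁ : ∀ z₁ z₂, f₁ z₁ z₂ = z₂)
    (hf₂ : ∀ z₁ z₂, f₂ z₁ z₂ =
      - c₁ • sigv α₁ (M.mulVec z₁) - c₂ • sigv α₂ (M.mulVec z₂)) :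
    ∀ (ε : ℝ), 0 < ε → ∀ z₁ z₂ : Fin N → ℝ,
      f₁ (ε ^ (2:ℝ) • z₁) (ε ^ (α₁ + 1) • z₂) = ε ^ ((α₁ - 1) + 2) • f₁ z₁ z₂ ∧
      f₂ (ε ^ (2:ℝ) • z₁) (ε ^ (α₁ + 1) • z₂) = ε ^ ((α₁ - 1) + (α₁ + 1)) • f₂ z₁ z₂ :=
  closed_loop_homogeneous_general N M c₁ c₂ α₁ α₂ hα₁ hα₂ f₁ f₂ hf₁ hf₂
end

section
/- Let V : [0,∞) → [0,∞) be differentiable with V(t₀) = V₀ ≥ 0 and suppose V'(t) ≤ -c·√(V(t)) for some constant c > 0 whenever V(t) > 0. Then V(t) = 0 for all t ≥ t₀ + 2√(V₀)/c. -/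
/-! Where `V > 0` the chain rule gives `(√V)' = V' / (2√V) ≤ -c/2`, so `√V` decreases at least
linearly with slope `c/2` and cannot stay positive beyond time `2√V₀/c`. For the argument to apply
on all of `[t₀, t]` one needs `V` positive there, which follows from `V` being antitone: at a zero
of `V` inside `(t₀, ∞)` the nonnegative `V` has a local minimum, hence vanishing derivative. -/

open Set

theorem antitoneOn_of_nonneg_of_deriv_nonpos_of_pos {D : Set ℝ} (hD : Convex ℝ D) {f : ℝ → ℝ}
    (hf : ContinuousOn f D) (hf' : DifferentiableOn ℝ f (interior D))
    (hf_nonneg : ∀ x ∈ D, 0 ≤ f x) (hf'_nonpos : ∀ x ∈ interior D, 0 < f x → deriv f x ≤ 0) :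
    AntitoneOn f D := by
  refine antitoneOn_of_deriv_nonpos hD hf hf' fun x hx => ?_
  rcases (hf_nonneg x (interior_subset hx)).lt_or_eq with hpos | hzero
  · exact hf'_nonpos x hx hpos
  · have hmin : IsLocalMin f x :=
      Filter.mem_of_superset (mem_interior_iff_mem_nhds.1 hx) fun y hy =>
        hzero ▸ hf_nonneg y hy
    exact hmin.deriv_eq_zero.le

theorem sqrt_sub_sqrt_le_of_deriv_le_neg_mul_sqrt {D : Set ℝ} (hD : Convex ℝ D) {f : ℝ → ℝ}
    {c : ℝ} (hf_pos : ∀ x ∈ D, 0 < f x) (hf : ∀ x ∈ D, DifferentiableAt ℝ f x)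
    (hf' : ∀ x ∈ interior D, deriv f x ≤ -c * √(f x)) {x y : ℝ} (hx : x ∈ D) (hy : y ∈ D)
    (hxy : x ≤ y) : √(f y) - √(f x) ≤ -(c / 2) * (y - x) := by
  have hsqrt : ∀ z ∈ D, HasDerivAt (fun z => √(f z)) (deriv f z / (2 * √(f z))) z :=
    fun z hz => (hf z hz).hasDerivAt.sqrt (hf_pos z hz).ne'
  refine hD.image_sub_le_mul_sub_of_deriv_le
    (fun z hz => (hsqrt z hz).continuousAt.continuousWithinAt)
    (fun z hz => (hsqrt z (interior_subset hz)).differentiableAt.differentiableWithinAt)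
    (fun z hz => ?_) x hx y hy hxy
  have hroot : 0 < √(f z) := Real.sqrt_pos.2 (hf_pos z (interior_subset hz))
  rw [(hsqrt z (interior_subset hz)).deriv, div_le_iff₀ (by positivity)]
  linarith [hf' z hz]

/-- If V is nonnegative and differentiable on [t₀,∞) with
V'(t) ≤ -c√(V t) whenever V(t) > 0, then V(t) = 0 for all t ≥ t₀ + 2√(V t₀)/c. -/
theorem finite_time_convergence (V : ℝ → ℝ) (t₀ c : ℝ) (hc : 0 < c)
    (hV0 : ∀ t, t₀ ≤ t → 0 ≤ V t)
    (hVdiff : ∀ t, t₀ ≤ t → DifferentiableAt ℝ V t)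
    (hV' : ∀ t, t₀ ≤ t → 0 < V t → deriv V t ≤ -c * Real.sqrt (V t)) :
    ∀ t, t₀ + 2 * Real.sqrt (V t₀) / c ≤ t → V t = 0 := by
  intro t ht
  have hdelay : 2 * √(V t₀) ≤ c * (t - t₀) := (div_le_iff₀' hc).1 (by linarith)
  have ht₀ : t₀ ≤ t := (le_add_of_nonneg_right (by positivity)).trans ht
  have hanti : AntitoneOn V (Ici t₀) :=
    antitoneOn_of_nonneg_of_deriv_nonpos_of_pos (convex_Ici t₀)
      (fun s hs => (hVdiff s hs).continuousAt.continuousWithinAt)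
      (fun s hs => (hVdiff s (interior_subset hs)).differentiableWithinAt) hV0
      fun s hs hpos => (hV' s (interior_subset hs) hpos).trans
        (by nlinarith [Real.sqrt_nonneg (V s)])
  by_contra hne
  have hpos : ∀ s ∈ Icc t₀ t, 0 < V s := fun s hs =>
    ((hV0 t ht₀).lt_of_ne' hne).trans_le (hanti hs.1 ht₀ hs.2)
  have hdecay := sqrt_sub_sqrt_le_of_deriv_le_neg_mul_sqrt (convex_Icc t₀ t) hpos
    (fun s hs => hVdiff s hs.1)
    (fun s hs => hV' s (interior_subset hs).1 (hpos s (interior_subset hs)))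
    (left_mem_Icc.2 ht₀) (right_mem_Icc.2 ht₀) ht₀
  linarith [Real.sqrt_pos.2 (hpos t (right_mem_Icc.2 ht₀))]
end

section
/- Let M be a symmetric positive definite N×N matrix and let a : [t₀,∞) → ℝ^N satisfy (whenever defined) ȧ(t) = -β·sgn(M a(t)) - d(t), where sup_t ‖d(t)‖ < β. Then along solutions, the function V(t) = (1/2)a(t)^T M a(t) satisfies V'(t) ≤ -(β - sup_t‖d(t)‖)·‖M a(t)‖₁ ≤ -(β - sup_t‖d(t)‖)·‖M a(t)‖ ≤ -(β - sup_t‖d(t)‖)·(λ_min(M)/√λ_max(M))·√(2V(t)). -/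
/-!
Since `M` is symmetric, `V' = ȧ ⬝ᵥ M a`. Writing `x = M a`, the switching term contributes
`-β (sgn x ⬝ᵥ x) = -β ‖x‖₁`, and by Cauchy–Schwarz the disturbance contributes at most
`D ‖x‖₂ ≤ D ‖x‖₁`. For the last bound, the spectral theorem gives `M² ≥ (λmin² / λmax) M`
(as `e (e - λmin² / λmax) ≥ 0` on the spectrum), i.e. `‖M a‖₂² ≥ (λmin² / λmax) · 2V`.
-/

open Matrix
open scoped MatrixOrder

theorem Real.sign_mul_self (x : ℝ) : Real.sign x * x = |x| := by
  rcases lt_trichotomy x 0 with hx | rfl | hx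
  · rw [Real.sign_of_neg hx, abs_of_neg hx]; ring
  · simp
  · rw [Real.sign_of_pos hx, abs_of_pos hx]; ring

theorem Real.sqrt_sum_sq_le_sum_abs {ι : Type*} (s : Finset ι) (x : ι → ℝ) :
    √(∑ i ∈ s, x i ^ 2) ≤ ∑ i ∈ s, |x i| := by
  refine Real.sqrt_le_iff.2 ⟨Finset.sum_nonneg fun i _ => abs_nonneg _, ?_⟩
  simpa only [sq_abs] using Finset.sum_sq_le_sq_sum_of_nonneg fun i _ => abs_nonneg (x i)

section

variable {ι : Type*} [Fintype ι] {u v : ℝ → ι → ℝ} {u' v' : ι → ℝ} {t : ℝ}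

theorem HasDerivAt.dotProduct (hu : HasDerivAt u u' t) (hv : HasDerivAt v v' t) :
    HasDerivAt (fun s => u s ⬝ᵥ v s) (u' ⬝ᵥ v t + u t ⬝ᵥ v') t := by
  simp only [_root_.dotProduct, ← Finset.sum_add_distrib]
  exact HasDerivAt.fun_sum fun i _ => (hasDerivAt_pi.1 hu i).mul (hasDerivAt_pi.1 hv i)

theorem HasDerivAt.mulVec {m : Type*} [Fintype m] (A : Matrix m ι ℝ) (hu : HasDerivAt u u' t) :
    HasDerivAt (fun s => A *ᵥ u s) (A *ᵥ u') t :=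
  A.mulVecLin.toContinuousLinearMap.hasFDerivAt.comp_hasDerivAt t hu

theorem HasDerivAt.dotProduct_mulVec_self {A : Matrix ι ι ℝ} (hA : A.IsSymm)
    (hu : HasDerivAt u u' t) :
    HasDerivAt (fun s => u s ⬝ᵥ A *ᵥ u s) (2 * (u' ⬝ᵥ A *ᵥ u t)) t := by
  convert hu.dotProduct (hu.mulVec A) using 1
  rw [dotProduct_mulVec, ← mulVec_transpose, hA.eq, dotProduct_comm]
  ring

end

theorem neg_mul_sign_sub_dotProduct_le {ι : Type*} [Fintype ι] (x d : ι → ℝ) {β D : ℝ}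
    (hd : √(∑ i, d i ^ 2) ≤ D) :
    (fun i => -β * Real.sign (x i) - d i) ⬝ᵥ x ≤ -(β - D) * ∑ i, |x i| := by
  have hexpand : (fun i => -β * Real.sign (x i) - d i) ⬝ᵥ x = -β * ∑ i, |x i| - d ⬝ᵥ x := by
    simp only [dotProduct, sub_mul, Finset.sum_sub_distrib, Finset.mul_sum, mul_assoc,
      Real.sign_mul_self]
  have hcs : -(d ⬝ᵥ x) ≤ D * ∑ i, |x i| := calc
    -(d ⬝ᵥ x) = ∑ i, -d i * x i := by simp [dotProduct]
    _ ≤ √(∑ i, (-d i) ^ 2) * √(∑ i, x i ^ 2) := Real.sum_mul_le_sqrt_mul_sqrt _ _ _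
    _ ≤ D * ∑ i, |x i| := by
      simp only [neg_sq]
      exact mul_le_mul hd (Real.sqrt_sum_sq_le_sum_abs _ x) (Real.sqrt_nonneg _)
        ((Real.sqrt_nonneg _).trans hd)
  rw [hexpand]
  linarith

section

variable {n : Type*} [Fintype n] [DecidableEq n] {M : Matrix n n ℝ} (hM : M.IsHermitian)

theorem Matrix.IsHermitian.posSemidef_mul_self_sub_smul {c : ℝ}
    (hc : ∀ i, 0 ≤ hM.eigenvalues i * (hM.eigenvalues i - c)) :
    (M * M - c • M).PosSemidef := by
  have hsa : IsSelfAdjoint M := hM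
  have hcfc : cfc (fun e : ℝ => e * e - c * e) M = M * M - c • M := by
    rw [cfc_sub _ _ M, cfc_mul _ _ M, cfc_const_mul _ _ M, cfc_id' ℝ M]
  rw [← nonneg_iff_posSemidef, ← hcfc]
  refine cfc_nonneg fun e he => ?_
  obtain ⟨i, rfl⟩ := hM.spectrum_real_eq_range_eigenvalues ▸ he
  linarith [hc i]

theorem Matrix.IsHermitian.mul_dotProduct_mulVec_le {c : ℝ}
    (hc : ∀ i, 0 ≤ hM.eigenvalues i * (hM.eigenvalues i - c)) (x : n → ℝ) :
    c * (x ⬝ᵥ M *ᵥ x) ≤ (M *ᵥ x) ⬝ᵥ (M *ᵥ x) := by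
  have h := (hM.posSemidef_mul_self_sub_smul hc).dotProduct_mulVec_nonneg x
  rw [star_trivial, sub_mulVec, ← mulVec_mulVec, smul_mulVec, dotProduct_sub, dotProduct_smul,
    dotProduct_mulVec x M, ← mulVec_transpose, (isHermitian_iff_isSymm.1 hM).eq] at h
  simpa [sub_nonneg] using h

theorem Matrix.IsHermitian.div_sqrt_mul_sqrt_dotProduct_mulVec_le {lmin lmax : ℝ}
    (hmin : ∀ i, lmin ≤ hM.eigenvalues i) (hmax : ∀ i, hM.eigenvalues i ≤ lmax) (x : n → ℝ) :
    lmin / √lmax * √(x ⬝ᵥ M *ᵥ x) ≤ √(∑ i, (M *ᵥ x) i ^ 2) := by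
  rcases le_or_gt lmin 0 with hlmin | hlmin
  · exact (mul_nonpos_of_nonpos_of_nonneg (div_nonpos_of_nonpos_of_nonneg hlmin
      (Real.sqrt_nonneg _)) (Real.sqrt_nonneg _)).trans (Real.sqrt_nonneg _)
  rcases le_or_gt lmax 0 with hlmax | hlmax
  · simp [Real.sqrt_eq_zero'.2 hlmax]
  have hc : ∀ i, 0 ≤ hM.eigenvalues i * (hM.eigenvalues i - lmin ^ 2 / lmax) := fun i => by
    have hpos : 0 < hM.eigenvalues i := hlmin.trans_le (hmin i)
    refine mul_nonneg hpos.le (sub_nonneg.2 ((div_le_iff₀ hlmax).2 ?_))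
    nlinarith [hmin i, hmax i]
  rw [← Real.sqrt_sq hlmin.le, ← Real.sqrt_div (sq_nonneg _),
    ← Real.sqrt_mul (div_nonneg (sq_nonneg _) hlmax.le)]
  exact Real.sqrt_le_sqrt (by simpa [dotProduct, sq] using hM.mul_dotProduct_mulVec_le hc x)

end

theorem sliding_mode_estimator_lyapunov_general (N : ℕ)
    (M : Matrix (Fin N) (Fin N) ℝ) (hM : M.IsHermitian)
    (lmin lmax : ℝ)
    (hmin : ∀ i, lmin ≤ hM.eigenvalues i)
    (hmax : ∀ i, hM.eigenvalues i ≤ lmax)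
    (β D : ℝ)
    (t₀ : ℝ) (a d : ℝ → Fin N → ℝ)
    (hd : ∀ t, t₀ ≤ t → Real.sqrt (∑ i, (d t i)^2) ≤ D) (hDβ : D < β)
    (ha : ∀ t, t₀ ≤ t → HasDerivAt a
      (fun i => -β * Real.sign (M.mulVec (a t) i) - d t i) t)
    (V : ℝ → ℝ) (hV : ∀ t, V t = (1/2) * (a t ⬝ᵥ M.mulVec (a t))) :
    ∀ t, t₀ ≤ t →
      deriv V t ≤ -(β - D) * (∑ i, |M.mulVec (a t) i|) ∧
      -(β - D) * (∑ i, |M.mulVec (a t) i|) ≤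
        -(β - D) * Real.sqrt (∑ i, (M.mulVec (a t) i)^2) ∧
      -(β - D) * Real.sqrt (∑ i, (M.mulVec (a t) i)^2) ≤
        -(β - D) * (lmin / Real.sqrt lmax) * Real.sqrt (2 * V t) := by
  intro t ht
  have hgain : -(β - D) ≤ 0 := by linarith
  have hVderiv : HasDerivAt V
      ((fun i => -β * Real.sign ((M *ᵥ a t) i) - d t i) ⬝ᵥ M *ᵥ a t) t := by
    rw [funext hV]
    exact (((ha t ht).dotProduct_mulVec_self (isHermitian_iff_isSymm.1 hM)).const_mul
      (1 / 2)).congr_deriv (by ring)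
  have h2V : 2 * V t = a t ⬝ᵥ M *ᵥ a t := by
    rw [hV]
    ring
  refine ⟨?_, ?_, ?_⟩
  · rw [hVderiv.deriv]
    exact neg_mul_sign_sub_dotProduct_le _ _ (hd t ht)
  · exact mul_le_mul_of_nonpos_left (Real.sqrt_sum_sq_le_sum_abs _ _) hgain
  · rw [mul_assoc, h2V]
    exact mul_le_mul_of_nonpos_left
      (hM.div_sqrt_mul_sqrt_dotProduct_mulVec_le hmin hmax (a t)) hgain

/-- Along solutions of ȧ = -β sgn(Ma) - d with sup‖d‖ < β and M
symmetric positive definite, V = (1/2)aᵀMa satisfies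
V' ≤ -(β - D)‖Ma‖₁ ≤ -(β - D)‖Ma‖₂ ≤ -(β - D)(λmin/√λmax)√(2V). -/
theorem sliding_mode_estimator_lyapunov (N : ℕ)
    (M : Matrix (Fin N) (Fin N) ℝ) (hM : M.IsHermitian) (hMpd : M.PosDef)
    (lmin lmax : ℝ)
    (hmin : ∀ i, lmin ≤ hM.eigenvalues i) (hmin' : ∃ i, hM.eigenvalues i = lmin)
    (hmax : ∀ i, hM.eigenvalues i ≤ lmax) (hmax' : ∃ i, hM.eigenvalues i = lmax)
    (β D : ℝ) (hβ : 0 < β)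
    (t₀ : ℝ) (a d : ℝ → Fin N → ℝ)
    (hd : ∀ t, t₀ ≤ t → Real.sqrt (∑ i, (d t i)^2) ≤ D) (hDβ : D < β)
    (ha : ∀ t, t₀ ≤ t → HasDerivAt a
      (fun i => -β * Real.sign (M.mulVec (a t) i) - d t i) t)
    (V : ℝ → ℝ) (hV : ∀ t, V t = (1/2) * (a t ⬝ᵥ M.mulVec (a t))) :
    ∀ t, t₀ ≤ t →
      deriv V t ≤ -(β - D) * (∑ i, |M.mulVec (a t) i|) ∧
      -(β - D) * (∑ i, |M.mulVec (a t) i|) ≤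
        -(β - D) * Real.sqrt (∑ i, (M.mulVec (a t) i)^2) ∧
      -(β - D) * Real.sqrt (∑ i, (M.mulVec (a t) i)^2) ≤
        -(β - D) * (lmin / Real.sqrt lmax) * Real.sqrt (2 * V t) :=
  sliding_mode_estimator_lyapunov_general N M hM lmin lmax hmin hmax β D t₀ a d hd hDβ ha V hV
end
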